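/- arXiv:1809.01276 — 5 statements merged into one kernel-verified Lean document; each statement's English description precedes it below -/
import Mathlib

section
/- Let n ≥ 1 and let U ⊆ ℂⁿ × ℂ be a connected open set such that U ∩ H is nonempty, where H = {(z,w) ∈ ℂⁿ × ℂ : Im w = 0}. If h : U → ℂ is holomorphic on U and h vanishes at every point of U ∩ H, then h vanishes identically on U. (Uniqueness across the real hypersurface ℂⁿ × ℝ; this is the identity-theorem step used in the proof of the paper's Proposition 2.4.) -/
/-!
On each complex line `{z} × ℂ` near a point of `U ∩ H`, `h` is a holomorphic function of one
variable vanishing on a real segment, so by the one-variable identity theorem `h` vanishes near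
that point. The interior of the zero set of `h` is also closed in `U`: a ball in `U` around a limit
point meets it, and along every complex line through a common point the one-variable identity
theorem spreads the vanishing over the whole ball. Connectedness of `U` concludes.
-/

open Filter Topology Metric Set

theorem Complex.frequently_im_eq_zero_nhdsNE {w₀ : ℂ} (hw₀ : w₀.im = 0) :
    ∃ᶠ w in 𝓝[≠] w₀, w.im = 0 := by
  obtain ⟨x₀, rfl⟩ : ∃ x₀ : ℝ, (x₀ : ℂ) = w₀ := ⟨w₀.re, Complex.ext rfl hw₀.symm⟩
  have hmap : Tendsto ((↑) : ℝ → ℂ) (𝓝[≠] x₀) (𝓝[≠] (x₀ : ℂ)) :=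
    tendsto_nhdsWithin_of_tendsto_nhds_of_eventually_within _
      (Complex.continuous_ofReal.tendsto x₀ |>.mono_left nhdsWithin_le_nhds)
      (eventually_nhdsWithin_of_forall fun x hx => by simpa using hx)
  exact hmap.frequently (Frequently.of_forall fun x => Complex.ofReal_im x)

variable {E F : Type*} [NormedAddCommGroup E] [NormedSpace ℂ E]
  [NormedAddCommGroup F] [NormedSpace ℂ F] [CompleteSpace F]

theorem DifferentiableOn.eqOn_zero_of_isPreconnected_of_im_eq_zero {f : ℂ → F} {V : Set ℂ}
    (hf : DifferentiableOn ℂ f V) (hV : IsOpen V) (hVc : IsPreconnected V) {w₀ : ℂ}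
    (hw₀ : w₀ ∈ V) (hw₀im : w₀.im = 0) (hfV : ∀ w ∈ V, w.im = 0 → f w = 0) :
    EqOn f 0 V := by
  refine (hf.analyticOnNhd hV).eqOn_zero_of_preconnected_of_frequently_eq_zero hVc hw₀ ?_
  have hmem : ∀ᶠ w in 𝓝[≠] w₀, w ∈ V :=
    eventually_nhdsWithin_of_eventually_nhds (hV.mem_nhds hw₀)
  exact (Complex.frequently_im_eq_zero_nhdsNE hw₀im).mp (hmem.mono fun w hwV hwim =>
    hfV w hwV hwim)

/-- Restricted to the complex line `t ↦ q + t • (r - q)`, `f` becomes a holomorphic function of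
one variable on a convex, hence preconnected, open set containing `0` and `1`. -/
theorem DifferentiableOn.eqOn_zero_of_convex_of_eventuallyEq_zero {f : E → F} {V : Set E}
    (hf : DifferentiableOn ℂ f V) (hV : IsOpen V) (hVc : Convex ℝ V) {q : E} (hq : q ∈ V)
    (hfq : f =ᶠ[𝓝 q] 0) : EqOn f 0 V := by
  intro r hr
  set ℓ : ℂ → E := fun t => q + t • (r - q)
  have hℓ : Continuous ℓ := by fun_prop
  have hW : Convex ℝ (ℓ ⁻¹' V) :=
    (hVc.translate_preimage_right q).linear_preimage
      ((LinearMap.toSpanSingleton ℂ E (r - q)).restrictScalars ℝ)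
  have hℓ0 : Tendsto ℓ (𝓝 0) (𝓝 q) := by simpa [ℓ] using hℓ.tendsto 0
  have := ((hf.comp (by fun_prop) (mapsTo_preimage ℓ V)).analyticOnNhd
    (hV.preimage hℓ)).eqOn_zero_of_preconnected_of_eventuallyEq_zero hW.isPreconnected
    (by simpa [ℓ] using hq) (hℓ0.eventually hfq) (show (1 : ℂ) ∈ ℓ ⁻¹' V by simpa [ℓ] using hr)
  simpa [ℓ] using this

theorem DifferentiableOn.eqOn_zero_of_isPreconnected_of_eventuallyEq_zero {f : E → F} {U : Set E}
    (hf : DifferentiableOn ℂ f U) (hU : IsOpen U) (hUc : IsPreconnected U) {p₀ : E}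
    (hp₀ : p₀ ∈ U) (hfp₀ : f =ᶠ[𝓝 p₀] 0) : EqOn f 0 U := by
  set S : Set E := {p | f =ᶠ[𝓝 p] 0}
  have hS : IsOpen S := isOpen_setOfPred_eventually_nhds
  have hclosure : closure S ∩ U ⊆ S := by
    rintro p ⟨hpS, hpU⟩
    obtain ⟨ρ, hρ, hball⟩ := Metric.isOpen_iff.1 hU p hpU
    obtain ⟨q, hqball, hqS⟩ := mem_closure_iff.1 hpS _ isOpen_ball (mem_ball_self hρ)
    have hzero := (hf.mono hball).eqOn_zero_of_convex_of_eventuallyEq_zero isOpen_ball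
      (convex_ball p ρ) hqball hqS
    exact eventually_of_mem (ball_mem_nhds p hρ) hzero
  intro p hp
  exact (hUc.subset_of_closure_inter_subset hS ⟨p₀, hp₀, hfp₀⟩ hclosure hp).self_of_nhds

theorem DifferentiableOn.eventuallyEq_zero_of_forall_im_eq_zero {f : E × ℂ → F} {U : Set (E × ℂ)}
    (hf : DifferentiableOn ℂ f U) (hU : IsOpen U) {p₀ : E × ℂ} (hp₀ : p₀ ∈ U)
    (hp₀im : p₀.2.im = 0) (hfU : ∀ p ∈ U, p.2.im = 0 → f p = 0) : f =ᶠ[𝓝 p₀] 0 := by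
  obtain ⟨ε, hε, hball⟩ := Metric.isOpen_iff.1 hU p₀ hp₀
  refine eventually_of_mem (ball_mem_nhds p₀ hε) ?_
  rintro ⟨z, w⟩ hzw
  rw [← ball_prod_same] at hzw hball
  have hslice : MapsTo (fun w' => (z, w')) (ball p₀.2 ε) U := fun w' hw' => hball ⟨hzw.1, hw'⟩
  have hzero := (hf.comp (by fun_prop) hslice).eqOn_zero_of_isPreconnected_of_im_eq_zero
    isOpen_ball (convex_ball _ ε).isPreconnected (mem_ball_self hε) hp₀im
    (fun w' hw' hw'im => hfU _ (hslice hw') hw'im)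
  exact hzero hzw.2

theorem vanishing_on_flat_hypersurface_general (n : ℕ)
    (U : Set ((Fin n → ℂ) × ℂ)) (hUopen : IsOpen U) (hUconn : IsConnected U)
    (hne : (U ∩ {p : (Fin n → ℂ) × ℂ | p.2.im = 0}).Nonempty)
    (h : (Fin n → ℂ) × ℂ → ℂ) (hh : DifferentiableOn ℂ h U)
    (hvan : ∀ p ∈ U ∩ {p : (Fin n → ℂ) × ℂ | p.2.im = 0}, h p = 0) :
    ∀ p ∈ U, h p = 0 := by
  obtain ⟨p₀, hp₀U, hp₀im⟩ := hne
  have hseed : h =ᶠ[𝓝 p₀] 0 :=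
    hh.eventuallyEq_zero_of_forall_im_eq_zero hUopen hp₀U hp₀im fun p hpU hpim =>
      hvan p ⟨hpU, hpim⟩
  exact hh.eqOn_zero_of_isPreconnected_of_eventuallyEq_zero hUopen hUconn.isPreconnected hp₀U
    hseed

/-- Identity theorem across the real hypersurface ℂⁿ × ℝ: a holomorphic
function on a connected open set `U ⊆ ℂⁿ × ℂ` that vanishes on
`U ∩ {Im w = 0}` (assumed nonempty) vanishes identically on `U`. -/
theorem vanishing_on_flat_hypersurface (n : ℕ) (hn : 1 ≤ n)
    (U : Set ((Fin n → ℂ) × ℂ)) (hUopen : IsOpen U) (hUconn : IsConnected U)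
    (hne : (U ∩ {p : (Fin n → ℂ) × ℂ | p.2.im = 0}).Nonempty)
    (h : (Fin n → ℂ) × ℂ → ℂ) (hh : DifferentiableOn ℂ h U)
    (hvan : ∀ p ∈ U ∩ {p : (Fin n → ℂ) × ℂ | p.2.im = 0}, h p = 0) :
    ∀ p ∈ U, h p = 0 :=
  vanishing_on_flat_hypersurface_general n U hUopen hUconn hne h hh hvan
end

section
/- Let n ≥ 1, let A be an invertible Hermitian n×n complex matrix (Aᴴ = A), and let B be any n×n complex matrix. Define Q : ℂⁿ → ℝ by Q(z) = (z̄ᵀ A z) + (zᵀ B z) + conj(zᵀ B z), noting that z̄ᵀ A z is real since A is Hermitian. Then the critical set Σ = {z ∈ ℂⁿ : the real Fréchet derivative of Q at z is zero} is the underlying set of a real-linear subspace of ℂⁿ of real dimension at most n. (This is the statement, quoted and used in the proof of the paper's Proposition 2.1(b), that for an A-nondegenerate quadratic part the set ∇Q = 0 is a real subspace of dimension at most n.) -/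
/-!
With `C = B + Bᵀ` and the real-linear map `F z = A z + conj (C z)` one has `Q z = Re (z̄ᵀ F z)`,
and the real bilinear form `(w, z) ↦ Re (w̄ᵀ F z)` is symmetric because `A` is Hermitian and `C`
is symmetric. So `dQ_z w = 2 Re (w̄ᵀ F z)`, and the critical set is the real subspace `ker F`.
If `z` and `i z` both lie in `ker F`, then `A z + conj (C z) = 0 = A z - conj (C z)`, so `A z = 0`
and `z = 0`. Thus `ker F` and `i · ker F` are real subspaces of `ℂⁿ ≅ ℝ²ⁿ` of the same dimension
meeting only in `0`, which bounds that dimension by `n`.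
-/

open Matrix ComplexOrder

section QuadraticCriticalSet

variable {E F : Type*} [NormedAddCommGroup E] [NormedSpace ℝ E]
  [NormedAddCommGroup F] [NormedSpace ℝ F]

theorem ContinuousLinearMap.hasFDerivAt_apply_self_of_symm (b : E →L[ℝ] E →L[ℝ] F)
    (T : E →L[ℝ] E) (hT : ∀ x y, b x (T y) = b y (T x)) (z : E) :
    HasFDerivAt (fun x => b x (T x)) (2 • b.flip (T z)) z := by
  refine (b.hasFDerivAt_of_bilinear (hasFDerivAt_id z) T.hasFDerivAt).congr_fderiv ?_
  ext w
  simp [two_smul, hT z w]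

theorem ContinuousLinearMap.fderiv_apply_self_eq_zero_iff (b : E →L[ℝ] E →L[ℝ] F)
    (hb : ∀ v, b v v = 0 → v = 0) (T : E →L[ℝ] E) (hT : ∀ x y, b x (T y) = b y (T x))
    (z : E) : fderiv ℝ (fun x => b x (T x)) z = 0 ↔ T z = 0 := by
  rw [(b.hasFDerivAt_apply_self_of_symm T hT z).fderiv, two_smul, ← two_smul ℝ,
    smul_eq_zero_iff_right two_ne_zero]
  refine ⟨fun h => hb _ (DFunLike.congr_fun h (T z)), fun h => ?_⟩
  ext w
  simp [h]

end QuadraticCriticalSet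

theorem Submodule.two_mul_finrank_le_of_I_smul_mem {E : Type*} [AddCommGroup E] [Module ℂ E]
    [Module ℝ E] [IsScalarTower ℝ ℂ E] [FiniteDimensional ℝ E] (V : Submodule ℝ E)
    (hV : ∀ z ∈ V, Complex.I • z ∈ V → z = 0) :
    2 * Module.finrank ℝ V ≤ Module.finrank ℝ E := by
  set J := (LinearEquiv.smulOfNeZero ℂ E Complex.I Complex.I_ne_zero).restrictScalars ℝ
  have hdisj : V ⊓ V.map (J : E →ₗ[ℝ] E) = ⊥ := by
    rw [eq_bot_iff]
    rintro _ ⟨hIz, z, hz, rfl⟩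
    simp [hV z hz hIz, J]
  have hsum := Submodule.finrank_sup_add_finrank_inf_eq V (V.map (J : E →ₗ[ℝ] E))
  rw [hdisj, finrank_bot, add_zero, LinearEquiv.finrank_map_eq] at hsum
  have hle := Submodule.finrank_le (V ⊔ V.map (J : E →ₗ[ℝ] E))
  omega

variable {ι : Type*} [Fintype ι]

noncomputable def realDotProduct : (ι → ℂ) →L[ℝ] (ι → ℂ) →L[ℝ] ℝ :=
  (LinearMap.mk₂ ℝ (fun w v => (star w ⬝ᵥ v).re)
    (fun _ _ _ => by simp [star_add, add_dotProduct])
    (fun _ _ _ => by simp [star_smul, smul_dotProduct])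
    (fun _ _ _ => by simp [dotProduct_add])
    (fun _ _ _ => by simp [dotProduct_smul])).toContinuousBilinearMap

@[simp]
theorem realDotProduct_apply (w v : ι → ℂ) : realDotProduct w v = (star w ⬝ᵥ v).re := rfl

theorem realDotProduct_self_eq_zero {v : ι → ℂ} (hv : realDotProduct v v = 0) : v = 0 := by
  have h := Complex.nonneg_iff.mp (dotProduct_star_self_nonneg v)
  exact dotProduct_star_self_eq_zero.mp (Complex.ext hv h.2.symm)

noncomputable def Matrix.mulVecAddStarMulVec (A C : Matrix ι ι ℂ) : (ι → ℂ) →L[ℝ] (ι → ℂ) :=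
  LinearMap.toContinuousLinearMap
    { toFun := fun z => A *ᵥ z + star (C *ᵥ z)
      map_add' := fun x y => by simp only [mulVec_add, star_add]; abel
      map_smul' := fun r x => by simp [mulVec_smul, star_smul] }

@[simp]
theorem Matrix.mulVecAddStarMulVec_apply (A C : Matrix ι ι ℂ) (z : ι → ℂ) :
    A.mulVecAddStarMulVec C z = A *ᵥ z + star (C *ᵥ z) := rfl

theorem Matrix.realDotProduct_mulVecAddStarMulVec_comm {A C : Matrix ι ι ℂ}
    (hA : A.IsHermitian) (hC : Cᵀ = C) (x y : ι → ℂ) :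
    realDotProduct x (A.mulVecAddStarMulVec C y) =
      realDotProduct y (A.mulVecAddStarMulVec C x) := by
  have hAxy : star x ⬝ᵥ (A *ᵥ y) = star (star y ⬝ᵥ (A *ᵥ x)) := by
    rw [star_dotProduct, star_mulVec, hA.eq, dotProduct_mulVec]
  have hCxy : star x ⬝ᵥ star (C *ᵥ y) = star y ⬝ᵥ star (C *ᵥ x) := by
    rw [star_dotProduct_star, star_dotProduct_star, dotProduct_comm, dotProduct_mulVec,
      ← mulVec_transpose, hC]
  simp only [realDotProduct_apply, mulVecAddStarMulVec_apply, dotProduct_add, Complex.add_re,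
    hAxy, hCxy, Complex.star_def, Complex.conj_re]

theorem Matrix.realDotProduct_mulVecAddStarMulVec_self (A B : Matrix ι ι ℂ) (z : ι → ℂ) :
    realDotProduct z (A.mulVecAddStarMulVec (B + Bᵀ) z) =
      (star z ⬝ᵥ (A *ᵥ z) + z ⬝ᵥ (B *ᵥ z) + star (z ⬝ᵥ (B *ᵥ z))).re := by
  have hB : (B + Bᵀ) *ᵥ z ⬝ᵥ z = z ⬝ᵥ (B *ᵥ z) + z ⬝ᵥ (B *ᵥ z) := by
    rw [add_mulVec, add_dotProduct, mulVec_transpose, dotProduct_comm, ← dotProduct_mulVec]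
  simp only [realDotProduct_apply, mulVecAddStarMulVec_apply, dotProduct_add, star_dotProduct_star,
    hB, Complex.add_re, Complex.star_def, Complex.conj_re]
  ring

theorem Matrix.eq_zero_of_mem_ker_mulVecAddStarMulVec [DecidableEq ι] {A : Matrix ι ι ℂ}
    (hA : IsUnit A) (C : Matrix ι ι ℂ) {z : ι → ℂ} (hz : A.mulVecAddStarMulVec C z = 0)
    (hIz : A.mulVecAddStarMulVec C (Complex.I • z) = 0) : z = 0 := by
  have hI : A.mulVecAddStarMulVec C (Complex.I • z) = Complex.I • (A *ᵥ z - star (C *ᵥ z)) := by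
    simp [mulVec_smul, star_smul, sub_eq_add_neg]
  rw [hI, smul_eq_zero_iff_right Complex.I_ne_zero] at hIz
  rw [mulVecAddStarMulVec_apply] at hz
  have hAz : (2 : ℂ) • A *ᵥ z = 0 := by linear_combination (norm := module) hz + hIz
  rw [smul_eq_zero_iff_right two_ne_zero] at hAz
  exact (mulVec_injective_iff_isUnit.mpr hA) (by rw [hAz, mulVec_zero])

theorem critical_set_of_A_nondegenerate_quadric_general (n : ℕ)
    (A B : Matrix (Fin n) (Fin n) ℂ)
    (hA : A.IsHermitian) (hAinv : IsUnit A)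
    (Q : (Fin n → ℂ) → ℝ)
    (hQ : ∀ z : Fin n → ℂ,
      (Q z : ℂ) = star z ⬝ᵥ (A *ᵥ z) + z ⬝ᵥ (B *ᵥ z) + star (z ⬝ᵥ (B *ᵥ z))) :
    ∃ V : Submodule ℝ ((Fin n) → ℂ),
      (V : Set ((Fin n) → ℂ)) = {z | fderiv ℝ Q z = 0} ∧
      Module.finrank ℝ V ≤ n := by
  set F := A.mulVecAddStarMulVec (B + Bᵀ)
  have hQF : Q = fun z => realDotProduct z (F z) := funext fun z => by
    rw [realDotProduct_mulVecAddStarMulVec_self, ← hQ, Complex.ofReal_re]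
  have hF : ∀ x y, realDotProduct x (F y) = realDotProduct y (F x) :=
    realDotProduct_mulVecAddStarMulVec_comm hA <| by
      rw [transpose_add, transpose_transpose, add_comm]
  subst hQF
  refine ⟨LinearMap.ker F.toLinearMap, ?_, ?_⟩
  · ext z
    simp only [SetLike.mem_coe, LinearMap.mem_ker, Set.mem_ofPred_eq, ContinuousLinearMap.coe_coe,
      realDotProduct.fderiv_apply_self_eq_zero_iff (fun _ => realDotProduct_self_eq_zero) F hF]
  · have h := (LinearMap.ker F.toLinearMap).two_mul_finrank_le_of_I_smul_mem fun z =>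
      eq_zero_of_mem_ker_mulVecAddStarMulVec hAinv _
    have hdim : Module.finrank ℝ (Fin n → ℂ) = 2 * n := by
      simp [Module.finrank_pi_fintype, mul_comm]
    omega

/-- Lemma 2.1 of [crext2], used in the paper's Proposition 2.1(b): for an
invertible Hermitian matrix `A` and arbitrary matrix `B`, the critical set of
`Q(z) = z̄ᵀAz + zᵀBz + conj(zᵀBz)` is a real-linear subspace of ℂⁿ of real
dimension at most `n`. -/
theorem critical_set_of_A_nondegenerate_quadric (n : ℕ) (hn : 1 ≤ n)
    (A B : Matrix (Fin n) (Fin n) ℂ)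
    (hA : A.IsHermitian) (hAinv : IsUnit A)
    (Q : (Fin n → ℂ) → ℝ)
    (hQ : ∀ z : Fin n → ℂ,
      (Q z : ℂ) = star z ⬝ᵥ (A *ᵥ z) + z ⬝ᵥ (B *ᵥ z) + star (z ⬝ᵥ (B *ᵥ z))) :
    ∃ V : Submodule ℝ ((Fin n) → ℂ),
      (V : Set ((Fin n) → ℂ)) = {z | fderiv ℝ Q z = 0} ∧
      Module.finrank ℝ V ≤ n :=
  critical_set_of_A_nondegenerate_quadric_general n A B hA hAinv Q hQ
end

section
/- Let n ≥ 1 and let Ω ⊆ ℂⁿ × ℝ be a bounded domain. Let W ⊆ ℂⁿ × ℝ be open with closure(Ω) ⊆ W and let F = (F₁, F₂) : W → ℂⁿ × ℂ be real-analytic. Assume F is CR on Ω, i.e., for every s ∈ ℝ each component of F is holomorphic in z on the slice Ω_(s) = {z : (z,s) ∈ Ω}. If the last component F₂ is real-valued at every point of the frontier of Ω, then F₂ is real-valued at every point of Ω, and F₂ depends only on s on Ω: F₂(z,s) = F₂(z',s) whenever (z,s) ∈ Ω and (z',s) ∈ Ω. (Paper's Lemma 6.1: a real-analytic CR map on the closure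 of a bounded domain in ℂⁿ × ℝ that sends the boundary into ℂⁿ × ℝ maps the whole domain into ℂⁿ × ℝ, with last component a function of s alone.) -/
/-!
On a slice `Ω_(s)` the last component `f = F₂(·, s)` is holomorphic and continuous up to the
boundary, so the maximum principle applied to `exp (± i f)` shows that `Im f`, which vanishes on the
frontier, vanishes on `Ω`. A real-valued holomorphic function is constant on connected open sets,
so near every point of `Ω` the map `F₂` depends on `s` alone, through a real-analytic function of
`s`. Two points of `Ω` at the same level `s` are joined by a path in `Ω`; continuing these local
functions of `s` along the projection of the path to the `s`-axis gives one analytic function on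
an interval, and it takes both values of `F₂` at the same argument `s`.
-/

open Set Filter Topology Metric Bornology Complex

section Holomorphic

variable {E : Type*} [NormedAddCommGroup E] [NormedSpace ℂ E] {f : E → ℂ} {U : Set E}

theorem DiffContOnCl.re_le_of_forall_mem_frontier_re_le [Nontrivial E] (hU : IsBounded U)
    (hf : DiffContOnCl ℂ f U) {C : ℝ} (hC : ∀ z ∈ frontier U, (f z).re ≤ C) {z : E}
    (hz : z ∈ closure U) : (f z).re ≤ C := by
  have hexp : ‖exp (f z)‖ ≤ Real.exp C :=
    norm_le_of_forall_mem_frontier_norm_le hU ⟨hf.1.cexp, hf.2.cexp⟩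
      (fun w hw => by simpa only [norm_exp, Real.exp_le_exp] using hC w hw) hz
  simpa only [norm_exp, Real.exp_le_exp] using hexp

theorem DiffContOnCl.im_eq_zero_of_forall_mem_frontier [Nontrivial E] (hU : IsBounded U)
    (hf : DiffContOnCl ℂ f U) (hC : ∀ z ∈ frontier U, (f z).im = 0) {z : E}
    (hz : z ∈ closure U) : (f z).im = 0 := by
  have hle := (hf.const_smul (-I)).re_le_of_forall_mem_frontier_re_le hU (C := 0)
    (fun w hw => by simp [hC w hw]) hz
  have hge := (hf.const_smul I).re_le_of_forall_mem_frontier_re_le hU (C := 0)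
    (fun w hw => by simp [hC w hw]) hz
  simp only [Pi.smul_apply, smul_eq_mul, mul_re, neg_re, I_re, neg_im, I_im] at hle hge
  linarith

theorem DifferentiableOn.eqOn_of_im_eq_zero (hU : IsOpen U) (hUc : IsPreconnected U)
    (hf : DifferentiableOn ℂ f U) (him : ∀ z ∈ U, (f z).im = 0) {c : E} (hc : c ∈ U) :
    EqOn f (fun _ => f c) U := by
  have hne : ∀ z ∈ U, f z + I ≠ 0 := fun z hz h => by
    simpa [him z hz] using congrArg im h
  -- The Cayley transform maps `ℝ` injectively into the unit circle.
  set g : E → ℂ := fun z => (f z - I) / (f z + I)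
  have hg : DifferentiableOn ℂ g U := by
    simp only [g, div_eq_mul_inv]
    exact (hf.sub_const I).mul ((hf.add_const I).inv hne)
  have hnorm : ∀ z ∈ U, ‖g z‖ = 1 := fun z hz => by
    have : f z = ((f z).re : ℂ) := by simp [Complex.ext_iff, him z hz]
    rw [norm_div, div_eq_one_iff_eq (norm_ne_zero_iff.2 (hne z hz)), this]
    simp [Complex.norm_def, Complex.normSq_apply]
  have hcayley : EqOn g (fun _ => g c) U :=
    eqOn_of_isPreconnected_of_isMaxOn_norm hUc hU hg hc fun z hz => by
      simp only [mem_ofPred_eq, Function.comp_apply, hnorm z hz, hnorm c hc, le_refl]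
  intro z hz
  have := hcayley hz
  simp only [g] at this
  rw [div_eq_div_iff (hne z hz) (hne c hc)] at this
  have h2 : (2 * I) * (f z - f c) = 0 := by linear_combination this
  simpa [sub_eq_zero] using h2

end Holomorphic

section Continuation

variable {E : Type*} [NormedAddCommGroup E] [NormedSpace ℝ E]

theorem AnalyticOnNhd.exists_eqOn_union {J₁ J₂ : Set ℝ} (hJ₁ : IsOpen J₁) (hJ₂ : IsOpen J₂)
    (hc₁ : IsPreconnected J₁) (hc₂ : IsPreconnected J₂) {ψ₁ ψ₂ : ℝ → E}
    (h₁ : AnalyticOnNhd ℝ ψ₁ J₁) (h₂ : AnalyticOnNhd ℝ ψ₂ J₂) {x : ℝ} (hx₁ : x ∈ J₁)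
    (hx₂ : x ∈ J₂) (h : ψ₁ =ᶠ[𝓝 x] ψ₂) :
    ∃ ψ, AnalyticOnNhd ℝ ψ (J₁ ∪ J₂) ∧ EqOn ψ ψ₁ J₁ ∧ EqOn ψ ψ₂ J₂ := by
  classical
  have hcommon : EqOn ψ₁ ψ₂ (J₁ ∩ J₂) :=
    (h₁.mono inter_subset_left).eqOn_of_preconnected_of_eventuallyEq (h₂.mono inter_subset_right)
      (hc₁.ordConnected.inter hc₂.ordConnected).isPreconnected ⟨hx₁, hx₂⟩ h
  have hψ₁ : EqOn (J₁.piecewise ψ₁ ψ₂) ψ₁ J₁ := J₁.piecewise_eqOn ψ₁ ψ₂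
  have hψ₂ : EqOn (J₁.piecewise ψ₁ ψ₂) ψ₂ J₂ := fun y hy => by
    by_cases hy₁ : y ∈ J₁
    · rw [J₁.piecewise_eq_of_mem _ _ hy₁, hcommon ⟨hy₁, hy⟩]
    · exact J₁.piecewise_eq_of_notMem _ _ hy₁
  refine ⟨J₁.piecewise ψ₁ ψ₂, ?_, hψ₁, hψ₂⟩
  rintro y (hy | hy)
  · exact (h₁ y hy).congr (eventuallyEq_of_mem (hJ₁.mem_nhds hy) hψ₁.symm)
  · exact (h₂ y hy).congr (eventuallyEq_of_mem (hJ₂.mem_nhds hy) hψ₂.symm)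

/-- Reading `φ t` as a germ at `τ t`: there is one analytic function on an interval containing
`τ '' [a, b]` with germs `φ a` at `τ a` and `φ b` at `τ b`. -/
def ContinuesAlong (τ : ℝ → ℝ) (φ : ℝ → ℝ → E) (a b : ℝ) : Prop :=
  ∃ J : Set ℝ, ∃ ψ : ℝ → E, IsOpen J ∧ IsPreconnected J ∧ τ '' uIcc a b ⊆ J ∧
    AnalyticOnNhd ℝ ψ J ∧ ψ =ᶠ[𝓝 (τ a)] φ a ∧ ψ =ᶠ[𝓝 (τ b)] φ b

variable {τ : ℝ → ℝ} {φ : ℝ → ℝ → E} {a b c : ℝ}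

theorem ContinuesAlong.symm (h : ContinuesAlong τ φ a b) : ContinuesAlong τ φ b a := by
  obtain ⟨J, ψ, hJ, hJc, hτ, hψ, ha, hb⟩ := h
  exact ⟨J, ψ, hJ, hJc, uIcc_comm a b ▸ hτ, hψ, hb, ha⟩

theorem ContinuesAlong.trans (hab : ContinuesAlong τ φ a b) (hbc : ContinuesAlong τ φ b c) :
    ContinuesAlong τ φ a c := by
  obtain ⟨J₁, ψ₁, hJ₁, hc₁, hτ₁, hψ₁, ha, hb₁⟩ := hab
  obtain ⟨J₂, ψ₂, hJ₂, hc₂, hτ₂, hψ₂, hb₂, hc⟩ := hbc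
  have hb_mem₁ : τ b ∈ J₁ := hτ₁ (mem_image_of_mem τ right_mem_uIcc)
  have hb_mem₂ : τ b ∈ J₂ := hτ₂ (mem_image_of_mem τ left_mem_uIcc)
  obtain ⟨ψ, hψ, hψ₁J, hψ₂J⟩ := hψ₁.exists_eqOn_union hJ₁ hJ₂ hc₁ hc₂ hψ₂ hb_mem₁ hb_mem₂
    (hb₁.trans hb₂.symm)
  refine ⟨J₁ ∪ J₂, ψ, hJ₁.union hJ₂, hc₁.union (τ b) hb_mem₁ hb_mem₂ hc₂, ?_, hψ, ?_, ?_⟩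
  · calc τ '' uIcc a c ⊆ τ '' (uIcc a b ∪ uIcc b c) := image_mono uIcc_subset_uIcc_union_uIcc
      _ ⊆ J₁ ∪ J₂ := by rw [image_union]; exact union_subset_union hτ₁ hτ₂
  · have ha_mem : τ a ∈ J₁ := hτ₁ (mem_image_of_mem τ left_mem_uIcc)
    exact (eventuallyEq_of_mem (hJ₁.mem_nhds ha_mem) hψ₁J).trans ha
  · have hc_mem : τ c ∈ J₂ := hτ₂ (mem_image_of_mem τ right_mem_uIcc)
    exact (eventuallyEq_of_mem (hJ₂.mem_nhds hc_mem) hψ₂J).trans hc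

theorem ContinuesAlong.apply_eq (h : ContinuesAlong τ φ a b) (hab : τ a = τ b) :
    φ a (τ a) = φ b (τ b) := by
  obtain ⟨J, ψ, -, -, -, -, ha, hb⟩ := h
  rw [← ha.self_of_nhds, ← hb.self_of_nhds, hab]

theorem eventually_continuesAlong {t₀ : ℝ} {I : Set ℝ} (hI : IsOpen I) (hIc : IsPreconnected I)
    (hφ : AnalyticOnNhd ℝ (φ t₀) I) (hloc : ∀ᶠ t in 𝓝 t₀, τ t ∈ I ∧ EqOn (φ t) (φ t₀) I) :
    ∀ᶠ t in 𝓝 t₀, ContinuesAlong τ φ t₀ t := by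
  obtain ⟨ε, hε, hball⟩ := Metric.eventually_nhds_iff_ball.1 hloc
  filter_upwards [ball_mem_nhds t₀ hε] with t ht
  have hsub : uIcc t₀ t ⊆ ball t₀ ε :=
    (convex_ball t₀ ε).ordConnected.uIcc_subset (mem_ball_self hε) ht
  refine ⟨I, φ t₀, hI, hIc, ?_, hφ, EventuallyEq.rfl, ?_⟩
  · rintro _ ⟨u, hu, rfl⟩
    exact (hball u (hsub hu)).1
  · exact eventuallyEq_of_mem (hI.mem_nhds (hball t ht).1) (hball t ht).2.symm

theorem IsPreconnected.continuesAlong {s : Set ℝ} (hs : IsPreconnected s)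
    (hloc : ∀ t₀ ∈ s, ∃ I, IsOpen I ∧ IsPreconnected I ∧ AnalyticOnNhd ℝ (φ t₀) I ∧
      ∀ᶠ t in 𝓝 t₀, τ t ∈ I ∧ EqOn (φ t) (φ t₀) I)
    (ha : a ∈ s) (hb : b ∈ s) : ContinuesAlong τ φ a b := by
  refine hs.induction₂ (ContinuesAlong τ φ) (fun t₀ ht₀ => ?_)
    (fun _ _ _ _ _ _ => ContinuesAlong.trans) (fun _ _ _ _ => ContinuesAlong.symm) ha hb
  obtain ⟨I, hI, hIc, hφ, hloc⟩ := hloc t₀ ht₀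
  exact nhdsWithin_le_nhds (eventually_continuesAlong hI hIc hφ hloc)

end Continuation

theorem forall_im_eq_zero_of_forall_mem_frontier {E : Type*} [NormedAddCommGroup E]
    [NormedSpace ℂ E] [Nontrivial E] {Ω : Set (E × ℝ)} {f : E × ℝ → ℂ} (hΩ : IsOpen Ω)
    (hΩb : IsBounded Ω) (hfc : ContinuousOn f (closure Ω))
    (hf : ∀ s : ℝ, DifferentiableOn ℂ (fun z => f (z, s)) {z | (z, s) ∈ Ω})
    (hbd : ∀ p ∈ closure Ω \ Ω, (f p).im = 0) : ∀ p ∈ Ω, (f p).im = 0 := by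
  rintro ⟨z, s⟩ hp
  have hcont : Continuous fun z : E => (z, s) := Continuous.prodMk_left s
  have hcl : closure {z | (z, s) ∈ Ω} ⊆ {z | (z, s) ∈ closure Ω} :=
    hcont.closure_preimage_subset Ω
  refine DiffContOnCl.im_eq_zero_of_forall_mem_frontier (U := {z | (z, s) ∈ Ω})
    (hΩb.image_fst.subset fun z hz => ⟨(z, s), hz, rfl⟩)
    ⟨hf s, hfc.comp hcont.continuousOn hcl⟩ (fun w hw => ?_) (subset_closure hp)
  have hslice : IsOpen {z | (z, s) ∈ Ω} := hΩ.preimage hcont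
  rw [hslice.frontier_eq] at hw
  exact hbd _ ⟨hcl hw.1, hw.2⟩

theorem apply_eq_of_snd_eq {X G : Type*} [NormedAddCommGroup X] [NormedSpace ℝ X]
    [NormedAddCommGroup G] [NormedSpace ℝ G] {Ω : Set (X × ℝ)} {f : X × ℝ → G}
    (hΩ : IsOpen Ω) (hΩc : IsConnected Ω)
    (hfan : ∀ p ∈ Ω, AnalyticAt ℝ (fun u => f (p.1, u)) p.2)
    (hconst : ∀ z₀ ε s, ball z₀ ε ⊆ {z | (z, s) ∈ Ω} → ∀ z ∈ ball z₀ ε, f (z, s) = f (z₀, s))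
    {p q : X × ℝ} (hp : p ∈ Ω) (hq : q ∈ Ω) (hpq : p.2 = q.2) : f p = f q := by
  obtain ⟨γ, hγ⟩ := (hΩ.isConnected_iff_isPathConnected.1 hΩc).joinedIn p hp q hq
  have hcont :
      ContinuesAlong (fun t => (γ.extend t).2) (fun t u => f ((γ.extend t).1, u)) 0 1 := by
    refine isPreconnected_Icc.continuesAlong (fun t₀ ht₀ => ?_) (left_mem_Icc.2 zero_le_one)
      (right_mem_Icc.2 zero_le_one)
    have hp₀ : γ.extend t₀ ∈ Ω := by rw [γ.extend_apply ht₀]; exact hγ _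
    set p₀ := γ.extend t₀
    obtain ⟨ε, hε, hball⟩ := Metric.isOpen_iff.1 hΩ p₀ hp₀
    have hbox : ∀ z ∈ ball p₀.1 ε, ∀ u ∈ ball p₀.2 ε, (z, u) ∈ Ω := fun z hz u hu =>
      hball (by rw [← ball_prod_same]; exact mk_mem_prod hz hu)
    refine ⟨ball p₀.2 ε, isOpen_ball, (convex_ball _ _).isPreconnected,
      fun u hu => hfan _ (hbox _ (mem_ball_self hε) u hu), ?_⟩
    filter_upwards [γ.continuous_extend.continuousAt.preimage_mem_nhds (ball_mem_nhds p₀ hε)]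
      with t ht
    rw [mem_preimage, ← ball_prod_same] at ht
    exact ⟨ht.2, fun u hu => hconst _ _ _ (fun z hz => hbox z hz u hu) _ ht.1⟩
  simpa using hcont.apply_eq (by simpa using hpq)

theorem maps_to_flat_general (n : ℕ) (hn : 1 ≤ n)
    (Ω : Set ((Fin n → ℂ) × ℝ)) (hΩopen : IsOpen Ω) (hΩconn : IsConnected Ω)
    (hΩbdd : Bornology.IsBounded Ω)
    (W : Set ((Fin n → ℂ) × ℝ)) (hWopen : IsOpen W) (hWsub : closure Ω ⊆ W)
    (F : (Fin n → ℂ) × ℝ → (Fin n → ℂ) × ℂ) (hFan : AnalyticOn ℝ F W)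
    (hFCR₂ : ∀ s : ℝ, DifferentiableOn ℂ (fun z : Fin n → ℂ => (F (z, s)).2)
      {z : Fin n → ℂ | (z, s) ∈ Ω})
    (hbd : ∀ p ∈ closure Ω \ Ω, ((F p).2).im = 0) :
    (∀ p ∈ Ω, ((F p).2).im = 0) ∧
      (∀ (z z' : Fin n → ℂ) (s : ℝ), (z, s) ∈ Ω → (z', s) ∈ Ω →
        (F (z, s)).2 = (F (z', s)).2) := by
  have : Nonempty (Fin n) := ⟨⟨0, hn⟩⟩
  have hreal : ∀ p ∈ Ω, ((F p).2).im = 0 :=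
    forall_im_eq_zero_of_forall_mem_frontier hΩopen hΩbdd
      (hFan.continuousOn.snd.mono hWsub) hFCR₂ hbd
  refine ⟨hreal, fun z z' s hz hz' => apply_eq_of_snd_eq (f := fun p => (F p).2) hΩopen hΩconn
    (fun p hp => ?_) (fun z₀ ε s hball y hy => ?_) hz hz' rfl⟩
  · have hFp : AnalyticAt ℝ F (p.1, p.2) :=
      hWopen.analyticOn_iff_analyticOnNhd.1 hFan p (hWsub (subset_closure hp))
    exact analyticAt_snd.comp (hFp.comp (analyticAt_const.prod analyticAt_id))
  · exact ((hFCR₂ s).mono hball).eqOn_of_im_eq_zero isOpen_ball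
      (convex_ball z₀ ε).isPreconnected (fun w hw => hreal _ (hball hw))
      (mem_ball_self (pos_of_mem_ball hy)) hy

/-- Paper's Lemma 6.1: a real-analytic CR map on the closure of a bounded
domain `Ω ⊆ ℂⁿ × ℝ` whose last component is real-valued on the boundary has
last component real-valued on all of `Ω` and depending only on `s`. -/
theorem maps_to_flat (n : ℕ) (hn : 1 ≤ n)
    (Ω : Set ((Fin n → ℂ) × ℝ)) (hΩopen : IsOpen Ω) (hΩconn : IsConnected Ω)
    (hΩbdd : Bornology.IsBounded Ω)
    (W : Set ((Fin n → ℂ) × ℝ)) (hWopen : IsOpen W) (hWsub : closure Ω ⊆ W)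
    (F : (Fin n → ℂ) × ℝ → (Fin n → ℂ) × ℂ) (hFan : AnalyticOn ℝ F W)
    (hFCR₁ : ∀ s : ℝ, DifferentiableOn ℂ (fun z : Fin n → ℂ => (F (z, s)).1)
      {z : Fin n → ℂ | (z, s) ∈ Ω})
    (hFCR₂ : ∀ s : ℝ, DifferentiableOn ℂ (fun z : Fin n → ℂ => (F (z, s)).2)
      {z : Fin n → ℂ | (z, s) ∈ Ω})
    (hbd : ∀ p ∈ closure Ω \ Ω, ((F p).2).im = 0) :
    (∀ p ∈ Ω, ((F p).2).im = 0) ∧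
      (∀ (z z' : Fin n → ℂ) (s : ℝ), (z, s) ∈ Ω → (z', s) ∈ Ω →
        (F (z, s)).2 = (F (z', s)).2) :=
  maps_to_flat_general n hn Ω hΩopen hΩconn hΩbdd W hWopen hWsub F hFan hFCR₂ hbd
end

section
/- Let n ≥ 1 and let U ⊆ ℂⁿ be a bounded open set. Let f : closure(U) → ℂ be continuous on closure(U), holomorphic on U, and real-valued at every point of the frontier of U. Then f is constant on each connected component of U (and in particular f is real-valued on U). (This is the key step in the proof of the paper's Lemma 6.1: a bounded holomorphic function on a slice that is real on the slice boundary is constant.) -/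
open Complex Filter Topology

/-! The functions `exp (∓ i f)` are holomorphic with modulus `exp (± Im f)`, so the maximum modulus
principle on the bounded set `U` carries `Im f = 0` from the frontier to all of `closure U`. A
holomorphic function with vanishing imaginary part has zero derivative, since
`Re (Df v) = Im (Df (i v))`; hence it is constant on each connected component of the open set `U`.
-/

theorem ContinuousLinearMap.eq_zero_of_forall_im_eq_zero {E : Type*} [AddCommGroup E]
    [Module ℂ E] [TopologicalSpace E] (L : E →L[ℂ] ℂ) (h : ∀ v, (L v).im = 0) : L = 0 := by
  ext v
  have hre : (L v).re = 0 := by simpa [Complex.mul_im] using h (I • v)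
  exact Complex.ext hre (h v)

theorem fderiv_eq_zero_of_eventually_im_eq_zero {E : Type*} [NormedAddCommGroup E]
    [NormedSpace ℂ E] {f : E → ℂ} {z : E} (hf : DifferentiableAt ℂ f z)
    (him : ∀ᶠ w in 𝓝 z, (f w).im = 0) : fderiv ℂ f z = 0 := by
  have hD : HasFDerivAt (fun w => (f w).im)
      (imCLM.comp ((fderiv ℂ f z).restrictScalars ℝ)) z :=
    imCLM.hasFDerivAt.comp z (hf.hasFDerivAt.restrictScalars ℝ)
  have h0 : HasFDerivAt (fun w => (f w).im) (0 : E →L[ℝ] ℝ) z :=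
    (hasFDerivAt_const 0 z).congr_of_eventuallyEq him
  refine (fderiv ℂ f z).eq_zero_of_forall_im_eq_zero fun v => ?_
  simpa using congr($(hD.unique h0) v)

section MaximumPrinciple

variable {E : Type*} [NormedAddCommGroup E] [NormedSpace ℂ E] [Nontrivial E] {f : E → ℂ}
  {U : Set E}

theorem im_le_of_forall_mem_frontier_im_le (hU : Bornology.IsBounded U) (hf : DiffContOnCl ℂ f U)
    {C : ℝ} (hC : ∀ z ∈ frontier U, (f z).im ≤ C) {z : E} (hz : z ∈ closure U) :
    (f z).im ≤ C := by
  have norm_exp : ∀ w, ‖cexp (-I * f w)‖ = Real.exp (f w).im := fun w => by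
    simp [Complex.norm_exp]
  have hg : DiffContOnCl ℂ (fun w => cexp (-I * f w)) U :=
    ⟨(hf.1.const_mul _).cexp, (continuousOn_const.mul hf.2).cexp⟩
  have := Complex.norm_le_of_forall_mem_frontier_norm_le hU hg (C := Real.exp C)
    (fun w hw => by rw [norm_exp]; exact Real.exp_le_exp.2 (hC w hw)) hz
  rwa [norm_exp, Real.exp_le_exp] at this

theorem im_eq_zero_of_forall_mem_frontier_im_eq_zero (hU : Bornology.IsBounded U)
    (hf : DiffContOnCl ℂ f U) (h : ∀ z ∈ frontier U, (f z).im = 0) {z : E}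
    (hz : z ∈ closure U) : (f z).im = 0 := by
  have hle := im_le_of_forall_mem_frontier_im_le hU hf (fun w hw => (h w hw).le) hz
  have hge := im_le_of_forall_mem_frontier_im_le (C := 0) hU hf.neg
    (fun w hw => by simp [h w hw]) hz
  simp only [Pi.neg_apply, neg_im] at hge
  linarith

end MaximumPrinciple

/-- Key step in the paper's Lemma 6.1: a function continuous on the closure of
a bounded open set `U ⊆ ℂⁿ`, holomorphic on `U`, and real-valued on the
frontier of `U`, is constant on each connected component of `U` (in
particular, it is real-valued on `U`). -/
theorem constant_on_components_of_real_on_boundary (n : ℕ) (hn : 1 ≤ n)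
    (U : Set (Fin n → ℂ)) (hUopen : IsOpen U) (hUbdd : Bornology.IsBounded U)
    (f : (Fin n → ℂ) → ℂ)
    (hcont : ContinuousOn f (closure U))
    (hholo : DifferentiableOn ℂ f U)
    (hreal : ∀ p ∈ closure U \ U, (f p).im = 0) :
    (∀ p ∈ U, ∀ q ∈ connectedComponentIn U p, f q = f p) ∧
      (∀ p ∈ U, (f p).im = 0) := by
  have : Nonempty (Fin n) := ⟨⟨0, hn⟩⟩
  have him : ∀ p ∈ U, (f p).im = 0 := fun p hp =>
    im_eq_zero_of_forall_mem_frontier_im_eq_zero hUbdd ⟨hholo, hcont⟩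
      (hUopen.frontier_eq ▸ hreal) (subset_closure hp)
  have hderiv : U.EqOn (fderiv ℂ f) 0 := fun z hz =>
    fderiv_eq_zero_of_eventually_im_eq_zero (hholo.differentiableAt (hUopen.mem_nhds hz))
      (eventually_of_mem (hUopen.mem_nhds hz) him)
  refine ⟨fun p hp q hq => ?_, him⟩
  have hsub := connectedComponentIn_subset U p
  exact hUopen.connectedComponentIn.is_const_of_fderiv_eq_zero isPreconnected_connectedComponentIn
    (hholo.mono hsub) (hderiv.mono hsub) hq (mem_connectedComponentIn hp)
end

section
/- Let 0 < r < 1 < R be real numbers with r·R ≠ 1, and let A = {z ∈ ℂ : r < |z| < R} be the open annulus. The holomorphic function f(z) = z + 1/z (defined on ℂ \ {0}) is injective on the frontier of A (the two circles |z| = r and |z| = R), but f is not injective on A. (This is the paper's counterexample, after Lemma 7.3, showing that connectedness of the boundary is necessary in the one-variable boundary-injectivity lemma.) -/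
/-!
On nonzero points, `z + z⁻¹ = w + w⁻¹` factors as `(z - w) (z w - 1) = 0`, so `z ↦ z + z⁻¹`
identifies exactly the pairs `{z, z⁻¹}`. Two boundary points with `z w = 1` would have
`‖z‖ ‖w‖ ∈ {r², rR, R²}` equal to `1`, which the hypotheses exclude; inside the annulus, the unit
circle supplies the pair `I, I⁻¹ = -I`, both sent to `0`.
-/

open Complex

theorem add_inv_eq_add_inv_iff {K : Type*} [Field K] {z w : K} (hz : z ≠ 0) (hw : w ≠ 0) :
    z + z⁻¹ = w + w⁻¹ ↔ z = w ∨ z * w = 1 := by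
  have factor : z + z⁻¹ - (w + w⁻¹) = (z - w) * (z * w - 1) / (z * w) := by
    field_simp
    ring
  rw [← sub_eq_zero, factor, div_eq_zero_iff, mul_eq_zero, sub_eq_zero, sub_eq_zero,
    or_iff_left (mul_ne_zero hz hw)]

theorem injOn_add_inv {K : Type*} [Field K] {s : Set K} (h0 : 0 ∉ s)
    (hs : ∀ z ∈ s, ∀ w ∈ s, z * w = 1 → z = w) : Set.InjOn (fun z : K => z + z⁻¹) s := by
  intro z hz w hw hzw
  have hz0 : z ≠ 0 := fun h => h0 (h ▸ hz)
  have hw0 : w ≠ 0 := fun h => h0 (h ▸ hw)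
  rcases (add_inv_eq_add_inv_iff hz0 hw0).1 hzw with h | h
  · exact h
  · exact hs z hz w hw h

theorem not_injOn_add_inv {K : Type*} [Field K] {s : Set K} {z : K} (hz : z ∈ s)
    (hz_inv : z⁻¹ ∈ s) (hne : z ≠ z⁻¹) : ¬ Set.InjOn (fun z : K => z + z⁻¹) s :=
  fun hinj => hne (hinj hz hz_inv (by simp only [inv_inv, add_comm]))

theorem mul_ne_one_of_norm_mem_pair {K : Type*} [NormedDivisionRing K] {r R : ℝ} {z w : K}
    (hr : 0 < r) (hr1 : r < 1) (hR1 : 1 < R) (hrR : r * R ≠ 1)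
    (hz : ‖z‖ = r ∨ ‖z‖ = R) (hw : ‖w‖ = r ∨ ‖w‖ = R) : z * w ≠ 1 := by
  intro hzw
  have hnorm : ‖z‖ * ‖w‖ = 1 := by rw [← norm_mul, hzw, norm_one]
  rcases hz with hz | hz <;> rcases hw with hw | hw <;> rw [hz, hw] at hnorm
  · nlinarith
  · exact hrR hnorm
  · exact hrR (by linarith)
  · nlinarith

/-- Paper's counterexample after Lemma 7.3: for the annulus
`A = {r < |z| < R}` with `0 < r < 1 < R` and `rR ≠ 1`, the function
`f(z) = z + 1/z` is injective on the frontier of `A` (the two boundary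
circles) but not injective on `A`. -/
theorem annulus_counterexample (r R : ℝ) (hr : 0 < r) (hr1 : r < 1) (hR1 : 1 < R)
    (hrR : r * R ≠ 1) :
    Set.InjOn (fun z : ℂ => z + z⁻¹)
        ({z : ℂ | ‖z‖ = r} ∪ {z : ℂ | ‖z‖ = R}) ∧
      ¬ Set.InjOn (fun z : ℂ => z + z⁻¹)
        {z : ℂ | r < ‖z‖ ∧ ‖z‖ < R} := by
  constructor
  · refine injOn_add_inv ?_ fun z hz w hw hzw =>
      absurd hzw (mul_ne_one_of_norm_mem_pair hr hr1 hR1 hrR hz hw)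
    rintro (h | h) <;> simp only [Set.mem_ofPred_eq, norm_zero] at h <;> linarith
  · have hI : ‖I‖ = 1 := norm_I
    refine not_injOn_add_inv (z := I) ?_ ?_ ?_
    · exact ⟨hI ▸ hr1, hI ▸ hR1⟩
    · simp only [Set.mem_ofPred_eq, norm_inv, hI, inv_one]
      exact ⟨hr1, hR1⟩
    · rw [inv_I]
      exact fun h => I_ne_zero (CharZero.eq_neg_self_iff.1 h)
end
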